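/- arXiv:2211.08219 — 3 statements merged into one kernel-verified Lean document; each statement's English description precedes it below -/
import Mathlib

section
/- Let n ≥ 2, T > 0 and suppose u : [0,T] → ℝ is C² on (0,T], continuous at 0, satisfies u'' + (n-1) coth(t) u' ≥ 0 on an interval (t₀, T) with 0 ≤ t₀ < T, u(T) = 0, and u > 0 on (t₀, T), where u(t₀) = 0 if t₀ > 0 (and u bounded near 0 if t₀ = 0). Then this leads to a contradiction; equivalently, no such function exists with u'(T) < 0. -/
/-!
With `m = n - 1` the inequality reads `(sinh^m u')' ≥ 0`. Since `u > 0 = u(T)`, the mean value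
theorem gives `u'(ξ) < 0` for some `ξ ∈ (t₀, T)`, and monotonicity of `sinh^m u'` yields
`u' ≤ c / sinh^m` on `(t₀, ξ)` with `c < 0`. If `t₀ > 0`, `u` then decreases strictly from
`u(t₀) = 0`, contradicting `u > 0`. If `t₀ = 0`, then `m ≥ 1` and `sinh^m t ≤ cosh(1)^m t` on
`(0, 1]` give `u' ≤ -K / t`, so `u + K log` is antitone and `u` blows up at `0`, contradicting
boundedness.
-/

open Real Set Filter Topology

lemma sinh_le_cosh_one_mul {x : ℝ} (hx0 : 0 ≤ x) (hx1 : x ≤ 1) : sinh x ≤ cosh 1 * x := by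
  have hderiv : ∀ y ∈ interior (Icc (0 : ℝ) 1), deriv sinh y ≤ cosh 1 := fun y hy => by
    rw [interior_Icc] at hy
    rw [Real.deriv_sinh, cosh_le_cosh, abs_of_pos hy.1, abs_one]
    exact hy.2.le
  simpa using (convex_Icc 0 1).image_sub_le_mul_sub_of_deriv_le continuous_sinh.continuousOn
    differentiable_sinh.differentiableOn hderiv 0 ⟨le_rfl, zero_le_one⟩ x ⟨hx0, hx1⟩ hx0

lemma sinh_pow_le_cosh_one_pow_mul {m : ℕ} (hm : m ≠ 0) {x : ℝ} (hx0 : 0 ≤ x) (hx1 : x ≤ 1) :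
    sinh x ^ m ≤ cosh 1 ^ m * x :=
  calc sinh x ^ m ≤ (cosh 1 * x) ^ m :=
        pow_le_pow_left₀ (sinh_nonneg_iff.2 hx0) (sinh_le_cosh_one_mul hx0 hx1) m
    _ = cosh 1 ^ m * x ^ m := mul_pow _ _ _
    _ ≤ cosh 1 ^ m * x := by gcongr; exact pow_le_of_le_one hx0 hx1 hm

lemma ContDiffOn.differentiableAt_deriv {f : ℝ → ℝ} {s : Set ℝ} {x : ℝ}
    (hf : ContDiffOn ℝ 2 f s) (hs : IsOpen s) (hx : x ∈ s) : DifferentiableAt ℝ (deriv f) x :=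
  ((hf.deriv_of_isOpen hs (by norm_num)).differentiableOn one_ne_zero).differentiableAt
    (hs.mem_nhds hx)

lemma exists_deriv_neg_of_lt {f : ℝ → ℝ} {a b : ℝ} (hab : a < b) (hfc : ContinuousOn f (Icc a b))
    (hfd : DifferentiableOn ℝ f (Ioo a b)) (hlt : f b < f a) : ∃ c ∈ Ioo a b, deriv f c < 0 := by
  obtain ⟨c, hc, hslope⟩ := exists_deriv_eq_slope f hab hfc hfd
  exact ⟨c, hc, hslope ▸ div_neg_of_neg_of_pos (sub_neg.2 hlt) (sub_pos.2 hab)⟩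

lemma tendsto_nhdsGT_zero_atTop_of_deriv_le_neg_div {f : ℝ → ℝ} {K δ : ℝ} (hK : 0 < K)
    (hδ : 0 < δ) (hfc : ContinuousOn f (Ioc 0 δ)) (hfd : DifferentiableOn ℝ f (Ioo 0 δ))
    (hderiv : ∀ t ∈ Ioo 0 δ, deriv f t ≤ -K / t) : Tendsto f (𝓝[>] 0) atTop := by
  have hanti : AntitoneOn (fun t => f t + K * log t) (Ioc 0 δ) := by
    have hlog : DifferentiableOn ℝ log (Ioo 0 δ) := fun t ht =>
      (differentiableAt_log ht.1.ne').differentiableWithinAt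
    refine antitoneOn_of_deriv_nonpos (convex_Ioc 0 δ)
      (hfc.add (continuousOn_const.mul (continuousOn_log.mono fun t ht => ht.1.ne')))
      (by rw [interior_Ioc]; exact hfd.add (hlog.const_mul K)) fun t ht => ?_
    rw [interior_Ioc] at ht
    rw [deriv_fun_add (hfd.differentiableAt (isOpen_Ioo.mem_nhds ht))
      ((differentiableAt_log ht.1.ne').const_mul K), deriv_const_mul _
      (differentiableAt_log ht.1.ne'), deriv_log]
    linarith [hderiv t ht, show -K / t + K * t⁻¹ = 0 by ring]
  have hlog : Tendsto (fun t => f δ + K * log δ + -K * log t) (𝓝[>] 0) atTop :=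
    tendsto_atTop_add_const_left _ _
      (tendsto_log_nhdsGT_zero.const_mul_atBot_of_neg (neg_neg_of_pos hK))
  refine tendsto_atTop_mono' _ ?_ hlog
  filter_upwards [Ioo_mem_nhdsGT hδ] with t ht
  linarith [hanti ⟨ht.1, ht.2.le⟩ ⟨hδ, le_rfl⟩ ht.2.le]

lemma tendsto_nhdsGT_zero_atTop_of_deriv_le_div_sinh_pow {u : ℝ → ℝ} {m : ℕ} {c δ : ℝ}
    (hm : m ≠ 0) (hc : c < 0) (hδ : 0 < δ) (hcont : ContinuousOn u (Ioc 0 δ))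
    (hdiff : DifferentiableOn ℝ u (Ioo 0 δ)) (hderiv : ∀ t ∈ Ioo 0 δ, deriv u t ≤ c / sinh t ^ m) :
    Tendsto u (𝓝[>] 0) atTop := by
  have hC : 0 < cosh 1 ^ m := pow_pos (cosh_pos 1) m
  refine tendsto_nhdsGT_zero_atTop_of_deriv_le_neg_div (K := -c / cosh 1 ^ m) (δ := min δ 1)
    (div_pos (neg_pos.2 hc) hC) (lt_min hδ one_pos)
    (hcont.mono (Ioc_subset_Ioc_right (min_le_left _ _)))
    (hdiff.mono (Ioo_subset_Ioo_right (min_le_left _ _))) fun t ht => ?_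
  have ht1 : t ≤ 1 := ht.2.le.trans (min_le_right _ _)
  calc deriv u t ≤ c / sinh t ^ m := hderiv t ⟨ht.1, ht.2.trans_le (min_le_left _ _)⟩
    _ ≤ c / (cosh 1 ^ m * t) := by
        have hsinh : 0 < sinh t ^ m := pow_pos (sinh_pos_iff.2 ht.1) m
        rw [div_le_div_iff₀ hsinh (mul_pos hC ht.1)]
        nlinarith [sinh_pow_le_cosh_one_pow_mul hm ht.1.le ht1]
    _ = -(-c / cosh 1 ^ m) / t := by field_simp

lemma monotoneOn_sinh_pow_mul_deriv {u : ℝ → ℝ} {a b : ℝ} (m : ℕ) (ha : 0 ≤ a)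
    (hu : ∀ t ∈ Ioo a b, DifferentiableAt ℝ (deriv u) t)
    (hineq : ∀ t ∈ Ioo a b, 0 ≤ deriv (deriv u) t + m * (cosh t / sinh t) * deriv u t) :
    MonotoneOn (fun t => sinh t ^ m * deriv u t) (Ioo a b) := by
  have hderiv : ∀ t ∈ Ioo a b, HasDerivAt (fun t => sinh t ^ m * deriv u t)
      (sinh t ^ m * (deriv (deriv u) t + m * (cosh t / sinh t) * deriv u t)) t := by
    intro t ht
    refine (((hasDerivAt_sinh t).fun_pow m).fun_mul (hu t ht).hasDerivAt).congr_deriv ?_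
    have hsinh : sinh t ≠ 0 := (sinh_pos_iff.2 (ha.trans_lt ht.1)).ne'
    rcases m with _ | k
    · simp
    · rw [Nat.add_sub_cancel, pow_succ]
      field_simp
      ring
  refine monotoneOn_of_deriv_nonneg (convex_Ioo a b)
    (fun t ht => (hderiv t ht).continuousAt.continuousWithinAt)
    (fun t ht => (hderiv t (interior_subset ht)).differentiableAt.differentiableWithinAt)
    fun t ht => ?_
  rw [interior_Ioo] at ht
  rw [(hderiv t ht).deriv]
  exact mul_nonneg (pow_nonneg (sinh_pos_iff.2 (ha.trans_lt ht.1)).le m) (hineq t ht)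

lemma exists_neg_deriv_le_div_sinh_pow {u : ℝ → ℝ} {a b ξ : ℝ} {m : ℕ} (ha : 0 ≤ a)
    (hmono : MonotoneOn (fun t => sinh t ^ m * deriv u t) (Ioo a b)) (hξ : ξ ∈ Ioo a b)
    (hneg : deriv u ξ < 0) : ∃ c < 0, ∀ t ∈ Ioo a ξ, deriv u t ≤ c / sinh t ^ m := by
  refine ⟨sinh ξ ^ m * deriv u ξ,
    mul_neg_of_pos_of_neg (pow_pos (sinh_pos_iff.2 (ha.trans_lt hξ.1)) m) hneg, fun t ht => ?_⟩
  rw [le_div_iff₀ (pow_pos (sinh_pos_iff.2 (ha.trans_lt ht.1)) m), mul_comm]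
  exact hmono ⟨ht.1, ht.2.trans hξ.2⟩ hξ ht.2.le

theorem no_positive_supersolution_general (n : ℕ) (hn : 2 ≤ n) (T t₀ : ℝ)
    (ht₀ : 0 ≤ t₀) (ht₀T : t₀ < T)
    (u : ℝ → ℝ)
    (hreg : ContDiffOn ℝ 2 u (Set.Ioc 0 T))
    (hineq : ∀ t ∈ Set.Ioo t₀ T,
      deriv (deriv u) t + ((n : ℝ) - 1) * (Real.cosh t / Real.sinh t) * deriv u t ≥ 0)
    (huT : u T = 0)
    (hupos : ∀ t ∈ Set.Ioo t₀ T, 0 < u t)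
    (hzero : 0 < t₀ → u t₀ = 0)
    (hbdd : t₀ = 0 → ∃ M : ℝ, ∀ t ∈ Set.Ioo (0 : ℝ) T, |u t| ≤ M) :
    ¬ deriv u T < 0 := by
  intro _
  have hm : ((n - 1 : ℕ) : ℝ) = n - 1 := by rw [Nat.cast_sub (by omega), Nat.cast_one]
  have hcont : ∀ {a b}, 0 < a → b ≤ T → ContinuousOn u (Icc a b) := fun ha hb =>
    hreg.continuousOn.mono fun t ht => ⟨ha.trans_le ht.1, ht.2.trans hb⟩
  have hreg' : ContDiffOn ℝ 2 u (Ioo 0 T) := hreg.mono Ioo_subset_Ioc_self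
  have hdiff : DifferentiableOn ℝ u (Ioo 0 T) := hreg'.differentiableOn two_ne_zero
  have hmono := monotoneOn_sinh_pow_mul_deriv (n - 1) ht₀
    (fun t ht => hreg'.differentiableAt_deriv isOpen_Ioo ⟨ht₀.trans_lt ht.1, ht.2⟩)
    (by simpa only [hm] using hineq)
  obtain ⟨ξ, hξ, hξneg⟩ : ∃ ξ ∈ Ioo t₀ T, deriv u ξ < 0 := by
    obtain ⟨s, hs⟩ := nonempty_Ioo.2 ht₀T
    obtain ⟨ξ, hξ, hξneg⟩ := exists_deriv_neg_of_lt hs.2 (hcont (ht₀.trans_lt hs.1) le_rfl)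
      (hdiff.mono (Ioo_subset_Ioo_left (ht₀.trans hs.1.le))) (huT ▸ hupos s hs)
    exact ⟨ξ, ⟨hs.1.trans hξ.1, hξ.2⟩, hξneg⟩
  obtain ⟨c, hc, hbound⟩ := exists_neg_deriv_le_div_sinh_pow ht₀ hmono hξ hξneg
  rcases ht₀.eq_or_lt with rfl | h0
  · obtain ⟨M, hM⟩ := hbdd rfl
    have hblowup := tendsto_nhdsGT_zero_atTop_of_deriv_le_div_sinh_pow (by omega) hc hξ.1
      (hreg.continuousOn.mono (Ioc_subset_Ioc_right hξ.2.le))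
      (hdiff.mono (Ioo_subset_Ioo_right hξ.2.le)) hbound
    obtain ⟨t, hMt, ht⟩ := ((hblowup.eventually_gt_atTop M).and (Ioo_mem_nhdsGT ht₀T)).exists
    linarith [le_abs_self (u t), hM t ht]
  · have hanti := strictAntiOn_of_deriv_neg (convex_Icc t₀ ξ) (hcont h0 hξ.2.le) fun t ht => by
      rw [interior_Icc] at ht
      exact (hbound t ht).trans_lt
        (div_neg_of_neg_of_pos hc (pow_pos (sinh_pos_iff.2 (h0.trans ht.1)) _))
    linarith [hanti (left_mem_Icc.2 hξ.1.le) (right_mem_Icc.2 hξ.1.le) hξ.1, hupos ξ hξ, hzero h0]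

/-- No function `u`, C² on `(0,T]` and continuous at `0`, can satisfy
`u'' + (n-1) coth(t) u' ≥ 0` on `(t₀,T)`, `u(T) = 0`, `u > 0` on `(t₀,T)`,
with `u(t₀) = 0` if `t₀ > 0` (and `u` bounded near `0` if `t₀ = 0`),
together with `u'(T) < 0`. -/
theorem no_positive_supersolution (n : ℕ) (hn : 2 ≤ n) (T t₀ : ℝ)
    (hT : 0 < T) (ht₀ : 0 ≤ t₀) (ht₀T : t₀ < T)
    (u : ℝ → ℝ)
    (hreg : ContDiffOn ℝ 2 u (Set.Ioc 0 T))
    (hcont : ContinuousWithinAt u (Set.Icc 0 T) 0)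
    (hineq : ∀ t ∈ Set.Ioo t₀ T,
      deriv (deriv u) t + ((n : ℝ) - 1) * (Real.cosh t / Real.sinh t) * deriv u t ≥ 0)
    (huT : u T = 0)
    (hupos : ∀ t ∈ Set.Ioo t₀ T, 0 < u t)
    (hzero : 0 < t₀ → u t₀ = 0)
    (hbdd : t₀ = 0 → ∃ M : ℝ, ∀ t ∈ Set.Ioo (0 : ℝ) T, |u t| ≤ M) :
    ¬ deriv u T < 0 :=
  no_positive_supersolution_general n hn T t₀ ht₀ ht₀T u hreg hineq huT hupos hzero hbdd
end

section
/- Under the same hypotheses as for the bubble U, the function z_n(x) := ((2-n)/2) U(x) - ∇U(x)·(x + D e_n) + D ∂U/∂x_n(x) admits the explicit expression z_n(x) = α_n |K|^{-(n-2)/4} · ((n-2)/2) · (|x|² + 1 - D²) / (|x̃|² + (x_n + D)² - 1)^{n/2}, and it satisfies the linearized system: -((4(n-1))/(n-2)) Δ z_n = ((n+2)/(n-2)) K U^{4/(n-2)} z_n in {x_n > 0} and (2/(n-2)) ∂z_n/∂ν = (n/(n-2)) H U^{2/(n-2)} z_n on {x_n = 0}, with ν = -e_n. -/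
open Real MeasureTheory

/-- Partial derivative in direction `i` of a function on Euclidean space. -/
noncomputable def pd {n : ℕ} (f : EuclideanSpace ℝ (Fin n) → ℝ) (i : Fin n)
    (x : EuclideanSpace ℝ (Fin n)) : ℝ :=
  deriv (fun t : ℝ => f (x + t • EuclideanSpace.single i (1 : ℝ))) 0

/-- The Euclidean Laplacian (sum of second partial derivatives). -/
noncomputable def lap {n : ℕ} (f : EuclideanSpace ℝ (Fin n) → ℝ)
    (x : EuclideanSpace ℝ (Fin n)) : ℝ :=
  ∑ i, pd (pd f i) i x

/-!
Put `v = D eₙ` and `W x = ‖x + v‖² - 1`, so that `U = c W^{-(n-2)/2}` with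
`c = (4n(n-1)/|K|)^{(n-2)/4}`. Since `∇U·(x + v) - D ∂ₙU = ∇U·x`, the function `zₙ` is
`-((n-2)/2 U + x·∇U)`, minus the derivative at `λ = 1` of the dilations `λ^{(n-2)/2} U(λx)`, and
a direct computation gives `zₙ = c (n-2)/2 · G W^{-n/2}` with `G x = ‖x‖² + 1 - D²`.

On a coordinate line both `G` and `W` are monic quadratics in the parameter, so every derivative
needed is a one-variable computation. Summing the second derivatives, the terms in `W^{-n/2}` and
`G W^{-n/2-1}` cancel because the exponent is `-n/2` in dimension `n`, which leaves
`Δzₙ = n(n+2) W^{-2} zₙ`. As `U^{4/(n-2)} = c^{4/(n-2)} W^{-2}` and, on `{xₙ = 0}`,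
`∂ₙzₙ = -n D zₙ / W`, the two equations reduce to `K c^{4/(n-2)} = -4n(n-1)` and
`H c^{2/(n-2)} = 2D`.
-/

open Filter Topology

section Quadratic

variable {a b β w α p : ℝ}

theorem hasDerivAt_quadratic (w α t : ℝ) :
    HasDerivAt (fun s => w + 2 * α * s + s ^ 2) (2 * (α + t)) t := by
  have h := (((hasDerivAt_id t).const_mul (2 * α)).const_add w).fun_add (hasDerivAt_pow 2 t)
  exact h.congr_deriv (by simp; ring)

theorem hasDerivAt_quadratic_rpow {t : ℝ} (ht : 0 < w + 2 * α * t + t ^ 2) :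
    HasDerivAt (fun s => (w + 2 * α * s + s ^ 2) ^ p)
      (p * (w + 2 * α * t + t ^ 2) ^ (p - 1) * (2 * (α + t))) t := by
  convert (hasDerivAt_quadratic w α t).rpow_const (p := p) (Or.inl ht.ne') using 1
  ring

theorem hasDerivAt_const_mul_quadratic_mul_quadratic_rpow {t : ℝ}
    (ht : 0 < w + 2 * α * t + t ^ 2) :
    HasDerivAt (fun s => a * ((b + 2 * β * s + s ^ 2) * (w + 2 * α * s + s ^ 2) ^ p))
      (a * (2 * (β + t) * (w + 2 * α * t + t ^ 2) ^ p +
        (b + 2 * β * t + t ^ 2) * (p * (w + 2 * α * t + t ^ 2) ^ (p - 1) * (2 * (α + t))))) t :=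
  ((hasDerivAt_quadratic b β t).fun_mul (hasDerivAt_quadratic_rpow ht)).const_mul a

theorem deriv_deriv_const_mul_quadratic_mul_quadratic_rpow (hw : 0 < w) :
    deriv (deriv fun s => a * ((b + 2 * β * s + s ^ 2) * (w + 2 * α * s + s ^ 2) ^ p)) 0 =
      a * (2 * w ^ p + 8 * p * α * β * w ^ (p - 1) +
        b * (2 * p * w ^ (p - 1) + 4 * p * (p - 1) * α ^ 2 * w ^ (p - 2))) := by
  have h0 : 0 < w + 2 * α * 0 + 0 ^ 2 := by simpa using hw
  have hpos : ∀ᶠ t in 𝓝 (0 : ℝ), 0 < w + 2 * α * t + t ^ 2 :=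
    continuousAt_const.eventually_lt (by fun_prop) h0
  have hderiv : (deriv fun s => a * ((b + 2 * β * s + s ^ 2) * (w + 2 * α * s + s ^ 2) ^ p))
      =ᶠ[𝓝 0] fun t => a * (2 * (β + t) * (w + 2 * α * t + t ^ 2) ^ p +
        (b + 2 * β * t + t ^ 2) * (p * (w + 2 * α * t + t ^ 2) ^ (p - 1) * (2 * (α + t)))) :=
    hpos.mono fun t ht => (hasDerivAt_const_mul_quadratic_mul_quadratic_rpow ht).deriv
  rw [hderiv.deriv_eq]
  have hβ := ((hasDerivAt_id (0 : ℝ)).const_add β).const_mul 2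
  have hα := ((hasDerivAt_id (0 : ℝ)).const_add α).const_mul 2
  refine (((hβ.fun_mul (hasDerivAt_quadratic_rpow h0)).add
    ((hasDerivAt_quadratic b β 0).fun_mul (((hasDerivAt_quadratic_rpow (p := p - 1) h0).const_mul
      p).fun_mul hα))).const_mul a).deriv.trans ?_
  rw [show p - 1 - 1 = p - 2 by ring]
  simp only [id, mul_zero, add_zero, zero_pow two_ne_zero]
  ring

end Quadratic

theorem mul_rpow_neg_half_rpow_div {c w m : ℝ} (hc : 0 ≤ c) (hw : 0 < w) (hm : m ≠ 0)
    (s : ℝ) : (c * w ^ (-(m / 2))) ^ (s / m) = c ^ (s / m) * w ^ (-(s / 2)) := by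
  rw [mul_rpow hc (rpow_nonneg hw.le _), ← rpow_mul hw.le]
  congr 2
  field_simp

theorem sum_mul_add_ite_val_eq {n m : ℕ} (hm : m < n) (f g : Fin n → ℝ) (D : ℝ) :
    ∑ i : Fin n, f i * (g i + if (i : ℕ) = m then D else 0) = ∑ i, f i * g i + D * f ⟨m, hm⟩ := by
  have hval (i : Fin n) : ((i : ℕ) = m) = (i = ⟨m, hm⟩) := by rw [Fin.ext_iff]
  simp only [hval, mul_add, Finset.sum_add_distrib, mul_ite, mul_zero, Finset.sum_ite_eq',
    Finset.mem_univ, if_true]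
  ring

section Euclidean

variable {ι : Type*} [Fintype ι] {n : ℕ}

theorem EuclideanSpace.norm_add_smul_single_sq [DecidableEq ι] (x : EuclideanSpace ℝ ι) (i : ι)
    (t : ℝ) :
    ‖x + t • EuclideanSpace.single i (1 : ℝ)‖ ^ 2 = ‖x‖ ^ 2 + 2 * x i * t + t ^ 2 := by
  rw [norm_add_sq_real, inner_smul_right, EuclideanSpace.inner_single_right, norm_smul,
    PiLp.norm_single]
  simp
  ring

theorem EuclideanSpace.norm_add_smul_single_add_sq [DecidableEq ι] (x v : EuclideanSpace ℝ ι)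
    (i : ι) (t : ℝ) :
    ‖x + t • EuclideanSpace.single i (1 : ℝ) + v‖ ^ 2 =
      ‖x + v‖ ^ 2 + 2 * (x + v) i * t + t ^ 2 := by
  rw [add_right_comm, EuclideanSpace.norm_add_smul_single_sq]

theorem EuclideanSpace.two_mul_sum_add_apply_mul_apply (x v : EuclideanSpace ℝ ι) :
    2 * ∑ i, (x + v) i * x i = ‖x + v‖ ^ 2 + ‖x‖ ^ 2 - ‖v‖ ^ 2 := by
  have hsum : ∑ i, (x + v) i * x i = inner ℝ x (x + v) := by simp [PiLp.inner_apply, mul_comm]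
  rw [hsum, inner_add_right, real_inner_self_eq_norm_sq, norm_add_sq_real]
  ring

theorem EuclideanSpace.sum_apply_sq (x : EuclideanSpace ℝ ι) : ∑ i, x i ^ 2 = ‖x‖ ^ 2 := by
  simp [EuclideanSpace.norm_sq_eq]

theorem Filter.EventuallyEq.pd_eq {f g : EuclideanSpace ℝ (Fin n) → ℝ}
    {x : EuclideanSpace ℝ (Fin n)} (h : f =ᶠ[𝓝 x] g) (i : Fin n) : pd f i x = pd g i x := by
  have hline : Tendsto (fun t : ℝ => x + t • EuclideanSpace.single i (1 : ℝ)) (𝓝 0) (𝓝 x) := by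
    simpa using (continuous_const.add (continuous_id.smul continuous_const)).tendsto
      (f := fun t : ℝ => x + t • EuclideanSpace.single i (1 : ℝ)) 0
  exact Filter.EventuallyEq.deriv_eq (hline.eventually h)

theorem Filter.EventuallyEq.lap_eq {f g : EuclideanSpace ℝ (Fin n) → ℝ}
    {x : EuclideanSpace ℝ (Fin n)} (h : f =ᶠ[𝓝 x] g) : lap f x = lap g x :=
  Finset.sum_congr rfl fun i _ =>
    Filter.EventuallyEq.pd_eq (h.eventuallyEq_nhds.mono fun _ hy => hy.pd_eq i) i

theorem pd_pd_eq_deriv_deriv (f : EuclideanSpace ℝ (Fin n) → ℝ) (i : Fin n)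
    (x : EuclideanSpace ℝ (Fin n)) :
    pd (pd f i) i x =
      deriv (deriv fun t : ℝ => f (x + t • EuclideanSpace.single i (1 : ℝ))) 0 := by
  unfold pd
  congr 1
  funext s
  simp_rw [add_assoc, ← add_smul]
  exact (deriv_comp_const_add (fun t => f (x + t • EuclideanSpace.single i (1 : ℝ))) s 0).trans
    (by rw [add_zero])

end Euclidean

section Bubble

variable {n : ℕ} (v : EuclideanSpace ℝ (Fin n)) (k : ℝ)

/-- `zₙ / (c (n-2)/2)` for the bubble `c (‖x + v‖² - k)^{-(n-2)/2}`. -/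
noncomputable def bubbleDilation (x : EuclideanSpace ℝ (Fin n)) : ℝ :=
  (‖x‖ ^ 2 + k - ‖v‖ ^ 2) * (‖x + v‖ ^ 2 - k) ^ (-((n : ℝ) / 2))

theorem pd_const_mul_rpow_quadric (a p : ℝ) {x : EuclideanSpace ℝ (Fin n)}
    (hx : 0 < ‖x + v‖ ^ 2 - k) (i : Fin n) :
    pd (fun y => a * (‖y + v‖ ^ 2 - k) ^ p) i x =
      a * (p * (‖x + v‖ ^ 2 - k) ^ (p - 1) * (2 * (x + v) i)) := by
  have hline :
      (fun t : ℝ => a * (‖x + t • EuclideanSpace.single i (1 : ℝ) + v‖ ^ 2 - k) ^ p) =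
        fun t => a * ((‖x + v‖ ^ 2 - k) + 2 * (x + v) i * t + t ^ 2) ^ p := by
    funext t
    rw [EuclideanSpace.norm_add_smul_single_add_sq]
    ring_nf
  have h0 : 0 < (‖x + v‖ ^ 2 - k) + 2 * (x + v) i * 0 + 0 ^ 2 := by simpa using hx
  unfold pd
  rw [hline]
  exact ((hasDerivAt_quadratic_rpow h0).const_mul a).deriv.trans
    (by simp only [mul_zero, add_zero, zero_pow two_ne_zero])

theorem const_mul_bubbleDilation_add_smul_single (a : ℝ) (x : EuclideanSpace ℝ (Fin n))
    (i : Fin n) :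
    (fun t : ℝ => a * bubbleDilation v k (x + t • EuclideanSpace.single i (1 : ℝ))) =
      fun t => a * (((‖x‖ ^ 2 + k - ‖v‖ ^ 2) + 2 * x i * t + t ^ 2) *
        ((‖x + v‖ ^ 2 - k) + 2 * (x + v) i * t + t ^ 2) ^ (-((n : ℝ) / 2))) := by
  funext t
  rw [bubbleDilation, EuclideanSpace.norm_add_smul_single_add_sq,
    EuclideanSpace.norm_add_smul_single_sq]
  ring_nf

theorem pd_const_mul_bubbleDilation (a : ℝ) {x : EuclideanSpace ℝ (Fin n)}
    (hx : 0 < ‖x + v‖ ^ 2 - k) (i : Fin n) :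
    pd (fun y => a * bubbleDilation v k y) i x =
      a * (2 * x i * (‖x + v‖ ^ 2 - k) ^ (-((n : ℝ) / 2)) - n * (‖x‖ ^ 2 + k - ‖v‖ ^ 2) *
        (x + v) i * (‖x + v‖ ^ 2 - k) ^ (-((n : ℝ) / 2) - 1)) := by
  have h0 : 0 < (‖x + v‖ ^ 2 - k) + 2 * (x + v) i * 0 + 0 ^ 2 := by simpa using hx
  unfold pd
  rw [const_mul_bubbleDilation_add_smul_single]
  exact (hasDerivAt_const_mul_quadratic_mul_quadratic_rpow h0).deriv.trans
    (by simp only [mul_zero, add_zero, zero_pow two_ne_zero]; ring)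

theorem lap_const_mul_bubbleDilation (a : ℝ) {x : EuclideanSpace ℝ (Fin n)}
    (hx : 0 < ‖x + v‖ ^ 2 - k) :
    lap (fun y => a * bubbleDilation v k y) x =
      k * n * (n + 2) * (‖x + v‖ ^ 2 - k) ^ (-2 : ℝ) * (a * bubbleDilation v k x) := by
  set W := ‖x + v‖ ^ 2 - k
  set G := ‖x‖ ^ 2 + k - ‖v‖ ^ 2
  set p := -((n : ℝ) / 2)
  have hterm (i : Fin n) : pd (pd (fun y => a * bubbleDilation v k y) i) i x =
      a * (2 * W ^ p + 2 * p * G * W ^ (p - 1)) + 8 * a * p * W ^ (p - 1) * ((x + v) i * x i) +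
        4 * a * p * (p - 1) * G * W ^ (p - 2) * (x + v) i ^ 2 := by
    rw [pd_pd_eq_deriv_deriv, const_mul_bubbleDilation_add_smul_single,
      deriv_deriv_const_mul_quadratic_mul_quadratic_rpow hx]
    ring
  have hinner : ∑ i, (x + v) i * x i = (W + G) / 2 := by
    linarith [EuclideanSpace.two_mul_sum_add_apply_mul_apply x v]
  have hnorm : ‖x + v‖ ^ 2 = W + k := by ring
  have hW0 : W ^ p = W ^ (p - 2) * W ^ 2 := by
    rw [← rpow_natCast, ← rpow_add hx]; norm_num
  have hW1 : W ^ (p - 1) = W ^ (p - 2) * W := by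
    rw [← rpow_add_one hx.ne']; ring_nf
  have hW2 : W ^ (-2 : ℝ) * W ^ p = W ^ (p - 2) := by
    rw [← rpow_add hx]; ring_nf
  unfold lap
  rw [Finset.sum_congr rfl fun i _ => hterm i]
  simp only [Finset.sum_add_distrib, ← Finset.mul_sum, Finset.sum_const, Finset.card_univ,
    Fintype.card_fin, nsmul_eq_mul, EuclideanSpace.sum_apply_sq, hinner, hnorm]
  rw [bubbleDilation, show k * n * (n + 2) * W ^ (-2 : ℝ) * (a * (G * W ^ p)) =
    k * n * (n + 2) * a * G * (W ^ (-2 : ℝ) * W ^ p) by ring, hW2, hW0, hW1]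
  ring

theorem sub_sum_pd_mul_eq_bubbleDilation {c : ℝ} {U : EuclideanSpace ℝ (Fin n) → ℝ}
    (hU : ∀ y, U y = c * (‖y + v‖ ^ 2 - k) ^ (-(((n : ℝ) - 2) / 2)))
    {x : EuclideanSpace ℝ (Fin n)} (hx : 0 < ‖x + v‖ ^ 2 - k) :
    -(((n : ℝ) - 2) / 2) * U x - ∑ i, pd U i x * x i =
      c * (((n : ℝ) - 2) / 2) * bubbleDilation v k x := by
  have hexp : -(((n : ℝ) - 2) / 2) - 1 = -((n : ℝ) / 2) := by ring
  have hpd (i : Fin n) : pd U i x * x i = c * (-(((n : ℝ) - 2) / 2)) *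
      (‖x + v‖ ^ 2 - k) ^ (-((n : ℝ) / 2)) * 2 * ((x + v) i * x i) := by
    rw [funext hU, pd_const_mul_rpow_quadric v k _ _ hx, hexp]
    ring
  have hinner := EuclideanSpace.two_mul_sum_add_apply_mul_apply x v
  rw [Finset.sum_congr rfl fun i _ => hpd i, ← Finset.mul_sum, hU, bubbleDilation,
    show -(((n : ℝ) - 2) / 2) = -((n : ℝ) / 2) + 1 by ring, rpow_add_one hx.ne']
  linear_combination
    (-(c * (-((n : ℝ) / 2) + 1)) * (‖x + v‖ ^ 2 - k) ^ (-((n : ℝ) / 2))) * hinner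

variable {c : ℝ} {U Z : EuclideanSpace ℝ (Fin n) → ℝ} {x : EuclideanSpace ℝ (Fin n)}

theorem eventuallyEq_const_mul_bubbleDilation
    (hZ : ∀ y, 0 < ‖y + v‖ ^ 2 - k → Z y = c * (((n : ℝ) - 2) / 2) * bubbleDilation v k y)
    (hx : 0 < ‖x + v‖ ^ 2 - k) :
    Z =ᶠ[𝓝 x] fun y => c * (((n : ℝ) - 2) / 2) * bubbleDilation v k y :=
  Filter.eventually_of_mem ((isOpen_lt continuous_const
    (by fun_prop : Continuous fun y : EuclideanSpace ℝ (Fin n) => ‖y + v‖ ^ 2 - k)).mem_nhds hx)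
    fun y hy => hZ y hy

theorem lap_eq_of_eq_bubbleDilation
    (hZ : ∀ y, 0 < ‖y + v‖ ^ 2 - k → Z y = c * (((n : ℝ) - 2) / 2) * bubbleDilation v k y)
    (hx : 0 < ‖x + v‖ ^ 2 - k) :
    lap Z x = k * n * (n + 2) * (‖x + v‖ ^ 2 - k) ^ (-2 : ℝ) * Z x := by
  rw [(eventuallyEq_const_mul_bubbleDilation v k hZ hx).lap_eq,
    lap_const_mul_bubbleDilation v k _ hx, hZ x hx]

theorem pd_eq_of_eq_bubbleDilation
    (hZ : ∀ y, 0 < ‖y + v‖ ^ 2 - k → Z y = c * (((n : ℝ) - 2) / 2) * bubbleDilation v k y)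
    (hx : 0 < ‖x + v‖ ^ 2 - k) {i : Fin n} (hxi : x i = 0) :
    pd Z i x = -(n * (x + v) i / (‖x + v‖ ^ 2 - k)) * Z x := by
  rw [(eventuallyEq_const_mul_bubbleDilation v k hZ hx).pd_eq,
    pd_const_mul_bubbleDilation v k _ hx, hZ x hx, bubbleDilation, hxi, rpow_sub_one hx.ne']
  ring

theorem rpow_eq_of_eq_bubble
    (hU : ∀ y, U y = c * (‖y + v‖ ^ 2 - k) ^ (-(((n : ℝ) - 2) / 2)))
    (hc : 0 ≤ c) (hn : (n : ℝ) - 2 ≠ 0) (hx : 0 < ‖x + v‖ ^ 2 - k) (s : ℝ) :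
    U x ^ (s / ((n : ℝ) - 2)) = c ^ (s / ((n : ℝ) - 2)) * (‖x + v‖ ^ 2 - k) ^ (-(s / 2)) := by
  rw [hU, mul_rpow_neg_half_rpow_div hc hx hn]

end Bubble
/-- The function `z_n = ((2-n)/2)U - ∇U·(x + D e_n) + D ∂U/∂x_n` has the explicit form
`α_n |K|^{-(n-2)/4} ((n-2)/2)(|x|² + 1 - D²)/(|x̃|² + (x_n+D)² - 1)^{n/2}` on the closed
half-space and solves the linearized system there. -/
theorem radial_element_of_kernel (n : ℕ) (hn : 3 ≤ n)
    (K H : ℝ) (hK : K < 0)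
    (D : ℝ) (hD : D = Real.sqrt ((n : ℝ) * ((n : ℝ) - 1)) * H / Real.sqrt |K|)
    (hD1 : 1 < D)
    (U Z : EuclideanSpace ℝ (Fin n) → ℝ)
    (hU : ∀ x : EuclideanSpace ℝ (Fin n),
      U x = ((4 * (n : ℝ) * ((n : ℝ) - 1)) ^ (((n : ℝ) - 2) / 4)) / |K| ^ (((n : ℝ) - 2) / 4) *
        (‖x‖ ^ 2 + 2 * D * x ⟨n - 1, by omega⟩ + D ^ 2 - 1) ^ (-(((n : ℝ) - 2) / 2)))
    (hZ : ∀ x : EuclideanSpace ℝ (Fin n),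
      Z x = ((2 - (n : ℝ)) / 2) * U x
        - (∑ i, pd U i x * (x i + if (i : ℕ) = n - 1 then D else 0))
        + D * pd U ⟨n - 1, by omega⟩ x) :
    (∀ x : EuclideanSpace ℝ (Fin n), 0 ≤ x ⟨n - 1, by omega⟩ →
      Z x = ((4 * (n : ℝ) * ((n : ℝ) - 1)) ^ (((n : ℝ) - 2) / 4)) / |K| ^ (((n : ℝ) - 2) / 4) *
        (((n : ℝ) - 2) / 2) * (‖x‖ ^ 2 + 1 - D ^ 2) /
          (‖x‖ ^ 2 + 2 * D * x ⟨n - 1, by omega⟩ + D ^ 2 - 1) ^ ((n : ℝ) / 2)) ∧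
    (∀ x : EuclideanSpace ℝ (Fin n), 0 < x ⟨n - 1, by omega⟩ →
      -((4 * ((n : ℝ) - 1)) / ((n : ℝ) - 2)) * lap Z x =
        ((n : ℝ) + 2) / ((n : ℝ) - 2) * K * (U x) ^ ((4 : ℝ) / ((n : ℝ) - 2)) * Z x) ∧
    (∀ x : EuclideanSpace ℝ (Fin n), x ⟨n - 1, by omega⟩ = 0 →
      (2 / ((n : ℝ) - 2)) * (-(pd Z ⟨n - 1, by omega⟩ x)) =
        (n : ℝ) / ((n : ℝ) - 2) * H * (U x) ^ ((2 : ℝ) / ((n : ℝ) - 2)) * Z x) := by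
  set N : Fin n := ⟨n - 1, by omega⟩
  set v : EuclideanSpace ℝ (Fin n) := D • EuclideanSpace.single N (1 : ℝ)
  set A := 4 * (n : ℝ) * ((n : ℝ) - 1)
  have hn3 : (3 : ℝ) ≤ n := by exact_mod_cast hn
  have hn2 : (n : ℝ) - 2 ≠ 0 := by linarith
  have hA : 0 ≤ A := by nlinarith
  have hquad (x : EuclideanSpace ℝ (Fin n)) :
      ‖x‖ ^ 2 + 2 * D * x N + D ^ 2 - 1 = ‖x + v‖ ^ 2 - 1 := by
    rw [EuclideanSpace.norm_add_smul_single_sq]; ring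
  simp only [hquad, ← div_rpow hA (abs_nonneg K)] at hU ⊢
  set c := (A / |K|) ^ (((n : ℝ) - 2) / 4)
  have hc (s : ℝ) : c ^ (s / ((n : ℝ) - 2)) = (A / |K|) ^ (s / 4) := by
    rw [← rpow_mul (div_nonneg hA (abs_nonneg K))]; congr 1; field_simp
  have hpos (x : EuclideanSpace ℝ (Fin n)) (hx : 0 ≤ x N) : 0 < ‖x + v‖ ^ 2 - 1 := by
    rw [← hquad]; nlinarith [sq_nonneg ‖x‖]
  have hZ' (x : EuclideanSpace ℝ (Fin n)) (hx : 0 < ‖x + v‖ ^ 2 - 1) :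
      Z x = c * (((n : ℝ) - 2) / 2) * bubbleDilation v 1 x := by
    rw [hZ, sum_mul_add_ite_val_eq (by omega), ← sub_sum_pd_mul_eq_bubbleDilation v 1 hU hx]
    ring
  refine ⟨fun x hx => ?_, fun x hx => ?_, fun x hx => ?_⟩
  · rw [hZ' x (hpos x hx), bubbleDilation, rpow_neg (hpos x hx).le]
    simp [v, norm_smul, div_eq_mul_inv, mul_assoc]
  · rw [lap_eq_of_eq_bubbleDilation v 1 hZ' (hpos x hx.le),
      rpow_eq_of_eq_bubble v 1 hU (by positivity) hn2 (hpos x hx.le), hc, abs_of_neg hK]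
    norm_num
    simp only [A]
    field_simp [hK.ne]
  · have hcoef : H * (A / |K|) ^ ((2 : ℝ) / 4) = 2 * D := by
      rw [hD, show (2 : ℝ) / 4 = 1 / 2 by norm_num, ← sqrt_eq_rpow, sqrt_div hA,
        show A = 2 ^ 2 * ((n : ℝ) * ((n : ℝ) - 1)) by ring, sqrt_mul (by norm_num),
        sqrt_sq (by norm_num)]
      ring
    have hvN : (x + v) N = D := by simp [v, hx]
    rw [pd_eq_of_eq_bubbleDilation v 1 hZ' (hpos x hx.ge) hx, hvN,
      rpow_eq_of_eq_bubble v 1 hU (by positivity) hn2 (hpos x hx.ge), hc,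
      show -((2 : ℝ) / 2) = -1 by norm_num, rpow_neg_one]
    linear_combination (-((n : ℝ) / ((n : ℝ) - 2)) * (‖x + v‖ ^ 2 - 1)⁻¹ * Z x) * hcoef
end

section
/- Let n ≥ 2, D > 1, α ≥ 0 and m with n + α < 2m. Then ∫_{ℝⁿ₊} |x̃|^α / (|x̃|² + (x_n + D)² - 1)^m dx = ω_{n-1} · I_m^{n-2+α} · φ_{(2m-n-α+1)/2}, where ω_{n-1} is the surface measure of the unit sphere S^{n-2} ⊂ ℝ^{n-1}, I_m^β = ∫₀^∞ r^β/(1+r²)^m dr, and φ_s = ∫_D^∞ (t²-1)^{-s} dt. -/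
/-!
Write `x = (x̃, t)` with `t = x_n > 0`. For fixed `t` the integrand is the radial function
`|x̃|^α / (|x̃|² + λ²)^m` of `x̃ ∈ ℝⁿ⁻¹`, where `λ² = (t + D)² - 1 > 0`; polar coordinates and
the scaling `r ↦ λ r` evaluate the `x̃`-integral as `ω_{n-1} I_m^{n-2+α} λ^{n-1+α-2m}`, and the
shift `t ↦ t - D` turns the remaining `t`-integral into `φ_{(2m-n-α+1)/2}`. All of this is done for
lower Lebesgue integrals in `[0, ∞]`, where Tonelli's theorem and the changes of variables hold
unconditionally; the Bochner integrals are recovered with `toReal`.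
-/

open Real MeasureTheory Measure Set Metric ENNReal Module

theorem lintegral_comp_mul_left_Ioi (f : ℝ → ℝ≥0∞) (a : ℝ) {c : ℝ} (hc : 0 < c) :
    ∫⁻ x in Ioi a, f (c * x) = ENNReal.ofReal c⁻¹ * ∫⁻ x in Ioi (c * a), f x := by
  have hemb : MeasurableEmbedding (c * ·) := (Homeomorph.mulLeft₀ c hc.ne').measurableEmbedding
  have hmp : MeasurePreserving (c * ·) volume (ENNReal.ofReal |c⁻¹| • volume) :=
    ⟨hemb.measurable, Real.map_volume_mul_left hc.ne'⟩
  have hpre : (c * ·) ⁻¹' Ioi (c * a) = Ioi a := by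
    ext x; simp [mul_lt_mul_iff_right₀ hc]
  rw [← hpre, hmp.setLIntegral_comp_preimage_emb hemb, Measure.restrict_smul,
    lintegral_smul_measure, smul_eq_mul, abs_of_pos (inv_pos.2 hc)]

theorem lintegral_comp_add_right_Ioi (f : ℝ → ℝ≥0∞) (a d : ℝ) :
    ∫⁻ x in Ioi a, f (x + d) = ∫⁻ x in Ioi (a + d), f x := by
  have h := (measurePreserving_add_right volume d).setLIntegral_comp_preimage_emb
    (measurableEmbedding_addRight d) f (Ioi (a + d))
  rwa [preimage_add_const_Ioi, add_sub_cancel_right] at h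

theorem rpow_mul_div_sq_add_sq {c x : ℝ} (hc : 0 < c) (hx : 0 ≤ x) (β m : ℝ) :
    (c * x) ^ β / ((c * x) ^ 2 + c ^ 2) ^ m = c ^ (β - 2 * m) * (x ^ β / (1 + x ^ 2) ^ m) := by
  rw [mul_rpow hc.le hx, show (c * x) ^ 2 + c ^ 2 = c ^ 2 * (1 + x ^ 2) by ring,
    mul_rpow (sq_nonneg c) (by positivity), ← rpow_natCast_mul hc.le, rpow_sub hc,
    Nat.cast_ofNat]
  have := rpow_pos_of_pos hc (2 * m)
  have := rpow_pos_of_pos (show 0 < 1 + x ^ 2 by positivity) m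
  field_simp

section Polar

variable {E : Type*} [NormedAddCommGroup E] [NormedSpace ℝ E] [MeasurableSpace E] [BorelSpace E]
  [Nontrivial E] [FiniteDimensional ℝ E] (μ : Measure E) [μ.IsAddHaarMeasure]

theorem lintegral_fun_norm_addHaar {f : ℝ → ℝ≥0∞} (hf : Measurable f) :
    ∫⁻ x, f ‖x‖ ∂μ =
      μ.toSphere univ * ∫⁻ r in Ioi 0, ENNReal.ofReal (r ^ (finrank ℝ E - 1)) * f r :=
  calc
    ∫⁻ x, f ‖x‖ ∂μ = ∫⁻ x : ({0}ᶜ : Set E), f ‖x.1‖ ∂(μ.comap (↑)) := by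
      rw [lintegral_subtype_comap (measurableSet_singleton 0).compl (f ‖·‖),
        restrict_compl_singleton]
    _ = ∫⁻ p, f p.2 ∂(μ.toSphere.prod (volumeIoiPow (finrank ℝ E - 1))) := by
      simpa only [homeomorphUnitSphereProd_apply_snd_coe] using
        μ.measurePreserving_homeomorphUnitSphereProd.lintegral_comp_emb
          (Homeomorph.measurableEmbedding _) (fun p => f p.2)
    _ = μ.toSphere univ * ∫⁻ r, f r ∂(volumeIoiPow (finrank ℝ E - 1)) := by
      rw [lintegral_prod _ (by fun_prop)]
      simp [lintegral_const, mul_comm]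
    _ = _ := by
      rw [volumeIoiPow, lintegral_withDensity_eq_lintegral_mul _ (by fun_prop) (by fun_prop),
        ← lintegral_subtype_comap measurableSet_Ioi]
      rfl

theorem lintegral_rpow_norm_div_sq_add {a : ℝ} (ha : 0 < a) (α m : ℝ) :
    ∫⁻ y, ENNReal.ofReal (‖y‖ ^ α / (‖y‖ ^ 2 + a) ^ m) ∂μ =
      μ.toSphere univ * ENNReal.ofReal (a ^ ((finrank ℝ E + α - 2 * m) / 2)) *
        ∫⁻ r in Ioi 0, ENNReal.ofReal (r ^ ((finrank ℝ E : ℝ) - 1 + α) / (1 + r ^ 2) ^ m) := by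
  obtain ⟨c, hc, rfl⟩ : ∃ c, 0 < c ∧ c ^ 2 = a := ⟨√a, sqrt_pos.2 ha, sq_sqrt ha.le⟩
  set β : ℝ := finrank ℝ E - 1 + α
  set g : ℝ → ℝ≥0∞ := fun r => ENNReal.ofReal (r ^ β / (r ^ 2 + c ^ 2) ^ m)
  have hpolar : ∫⁻ r in Ioi 0, ENNReal.ofReal (r ^ (finrank ℝ E - 1)) *
      ENNReal.ofReal (r ^ α / (r ^ 2 + c ^ 2) ^ m) = ∫⁻ r in Ioi 0, g r := by
    refine setLIntegral_congr_fun measurableSet_Ioi fun r (hr : 0 < r) => ?_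
    rw [← ENNReal.ofReal_mul (by positivity), ← mul_div_assoc, ← Real.rpow_natCast,
      ← rpow_add hr, Nat.cast_sub finrank_pos, Nat.cast_one]
  have hscale : ∫⁻ x in Ioi 0, g (c * x) = ENNReal.ofReal (c ^ (β - 2 * m)) *
      ∫⁻ r in Ioi 0, ENNReal.ofReal (r ^ β / (1 + r ^ 2) ^ m) := by
    rw [← lintegral_const_mul _ (by fun_prop)]
    refine setLIntegral_congr_fun measurableSet_Ioi fun x (hx : 0 < x) => ?_
    rw [← ENNReal.ofReal_mul (by positivity), ← rpow_mul_div_sq_add_sq hc hx.le]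
  rw [lintegral_comp_mul_left_Ioi g 0 hc, mul_zero] at hscale
  rw [lintegral_fun_norm_addHaar μ (f := fun r => ENNReal.ofReal (r ^ α / (r ^ 2 + c ^ 2) ^ m))
    (by fun_prop), hpolar, mul_assoc, rpow_div_two_eq_sqrt _ (sq_nonneg c), sqrt_sq hc.le]
  congr 1
  calc ∫⁻ r in Ioi 0, g r
      = ENNReal.ofReal c * (ENNReal.ofReal c⁻¹ * ∫⁻ r in Ioi 0, g r) := by
        rw [← mul_assoc, ← ENNReal.ofReal_mul hc.le, mul_inv_cancel₀ hc.ne', ENNReal.ofReal_one,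
          one_mul]
    _ = _ := by
        rw [hscale, ← mul_assoc, ← ENNReal.ofReal_mul hc.le,
          show (finrank ℝ E : ℝ) + α - 2 * m = 1 + (β - 2 * m) by ring, rpow_add hc, Real.rpow_one]

theorem lintegral_halfspace_prod {D : ℝ} (hD : 1 ≤ D) (α m : ℝ) :
    ∫⁻ p, ENNReal.ofReal (‖p.2‖ ^ α / (‖p.2‖ ^ 2 + (p.1 + D) ^ 2 - 1) ^ m)
        ∂((volume.restrict (Ioi 0)).prod μ) =
      μ.toSphere univ *
        (∫⁻ r in Ioi 0, ENNReal.ofReal (r ^ ((finrank ℝ E : ℝ) - 1 + α) / (1 + r ^ 2) ^ m)) *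
        ∫⁻ t in Ioi D, ENNReal.ofReal ((t ^ 2 - 1) ^ ((finrank ℝ E + α - 2 * m) / 2)) := by
  have hshift := lintegral_comp_add_right_Ioi
    (fun t => ENNReal.ofReal ((t ^ 2 - 1) ^ ((finrank ℝ E + α - 2 * m) / 2))) 0 D
  rw [zero_add] at hshift
  rw [lintegral_prod _ (by fun_prop), ← hshift, ← lintegral_const_mul _ (by fun_prop)]
  refine setLIntegral_congr_fun measurableSet_Ioi fun t (ht : 0 < t) => ?_
  have ha : 0 < (t + D) ^ 2 - 1 := by nlinarith
  simp_rw [add_sub_assoc _ ((t + D) ^ 2)]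
  rw [lintegral_rpow_norm_div_sq_add μ ha, mul_right_comm]

end Polar

theorem InnerProductSpace.volume_toSphere_univ {E : Type*} [NormedAddCommGroup E]
    [InnerProductSpace ℝ E] [FiniteDimensional ℝ E] [MeasurableSpace E] [BorelSpace E]
    [Nontrivial E] :
    (volume : Measure E).toSphere univ =
      ENNReal.ofReal (2 * π ^ ((finrank ℝ E : ℝ) / 2) / Gamma ((finrank ℝ E : ℝ) / 2)) := by
  have hd₀ : (0 : ℝ) < finrank ℝ E := by exact_mod_cast finrank_pos
  have hd : (0 : ℝ) < finrank ℝ E / 2 := by positivity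
  have hsqrt : √π ^ finrank ℝ E = π ^ ((finrank ℝ E : ℝ) / 2) := by
    rw [sqrt_eq_rpow, ← Real.rpow_natCast, ← rpow_mul pi_pos.le, one_div_mul_eq_div]
  rw [Measure.toSphere_apply_univ, InnerProductSpace.volume_ball, ENNReal.ofReal_one, one_pow,
    one_mul, ← ENNReal.ofReal_natCast, ← ENNReal.ofReal_mul (by positivity),
    Gamma_add_one hd.ne', hsqrt]
  have := Gamma_pos_of_pos hd
  congr 1
  field_simp

namespace EuclideanSpace

def measurableEquivLastProd (k : ℕ) :
    EuclideanSpace ℝ (Fin (k + 1)) ≃ᵐ ℝ × EuclideanSpace ℝ (Fin k) :=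
  (MeasurableEquiv.toLp 2 (Fin (k + 1) → ℝ)).symm.trans <|
    (MeasurableEquiv.piFinSuccAbove (fun _ => ℝ) (Fin.last k)).trans <|
      MeasurableEquiv.prodCongr (MeasurableEquiv.refl ℝ) (MeasurableEquiv.toLp 2 (Fin k → ℝ))

variable (k : ℕ)

theorem measurePreserving_measurableEquivLastProd :
    MeasurePreserving (measurableEquivLastProd k) :=
  (((MeasurePreserving.id volume).prod (PiLp.volume_preserving_toLp (Fin k))).comp
    (volume_preserving_piFinSuccAbove (fun _ => ℝ) (Fin.last k))).comp
    (volume_preserving_symm_measurableEquiv_toLp (Fin (k + 1)))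

theorem measurableEquivLastProd_apply_fst (x : EuclideanSpace ℝ (Fin (k + 1))) :
    (measurableEquivLastProd k x).1 = x (Fin.last k) := rfl

theorem measurableEquivLastProd_apply_snd (x : EuclideanSpace ℝ (Fin (k + 1))) (j : Fin k) :
    (measurableEquivLastProd k x).2 j = x j.castSucc := by
  change x ((Fin.last k).succAbove j) = _
  rw [Fin.succAbove_last]

theorem norm_measurableEquivLastProd_snd_sq (x : EuclideanSpace ℝ (Fin (k + 1))) :
    ‖(measurableEquivLastProd k x).2‖ ^ 2 = ‖x‖ ^ 2 - x (Fin.last k) ^ 2 := by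
  simp only [real_norm_sq_eq, measurableEquivLastProd_apply_snd, Fin.sum_univ_castSucc,
    add_sub_cancel_right]

theorem lintegral_halfspace {k : ℕ} [NeZero k] {D : ℝ} (hD : 1 ≤ D) (α m : ℝ) :
    ∫⁻ x in {x : EuclideanSpace ℝ (Fin (k + 1)) | 0 < x (Fin.last k)},
        ENNReal.ofReal ((‖x‖ ^ 2 - x (Fin.last k) ^ 2) ^ (α / 2) /
          (‖x‖ ^ 2 + 2 * D * x (Fin.last k) + D ^ 2 - 1) ^ m) =
      ENNReal.ofReal (2 * π ^ ((k : ℝ) / 2) / Gamma ((k : ℝ) / 2)) *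
        (∫⁻ r in Ioi 0, ENNReal.ofReal (r ^ ((k : ℝ) - 1 + α) / (1 + r ^ 2) ^ m)) *
        ∫⁻ t in Ioi D, ENNReal.ofReal ((t ^ 2 - 1) ^ (((k : ℝ) + α - 2 * m) / 2)) := by
  have hset : {x : EuclideanSpace ℝ (Fin (k + 1)) | 0 < x (Fin.last k)} =
      measurableEquivLastProd k ⁻¹' (Ioi 0 ×ˢ univ) := by
    ext x
    simp [measurableEquivLastProd_apply_fst]
  have hfun (x : EuclideanSpace ℝ (Fin (k + 1))) :
      (‖x‖ ^ 2 - x (Fin.last k) ^ 2) ^ (α / 2) /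
          (‖x‖ ^ 2 + 2 * D * x (Fin.last k) + D ^ 2 - 1) ^ m =
        ‖(measurableEquivLastProd k x).2‖ ^ α /
          (‖(measurableEquivLastProd k x).2‖ ^ 2 +
            ((measurableEquivLastProd k x).1 + D) ^ 2 - 1) ^ m := by
    rw [← norm_measurableEquivLastProd_snd_sq, rpow_div_two_eq_sqrt _ (sq_nonneg _),
      sqrt_sq (norm_nonneg _), norm_measurableEquivLastProd_snd_sq,
      measurableEquivLastProd_apply_fst]
    congr 2
    ring
  simp_rw [hfun, hset]
  rw [(measurePreserving_measurableEquivLastProd k).setLIntegral_comp_preimage_emb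
      (measurableEquivLastProd k).measurableEmbedding
      (fun p => ENNReal.ofReal (‖p.2‖ ^ α / (‖p.2‖ ^ 2 + (p.1 + D) ^ 2 - 1) ^ m)),
    volume_eq_prod, ← prod_restrict, restrict_univ, lintegral_halfspace_prod _ hD,
    InnerProductSpace.volume_toSphere_univ, finrank_euclideanSpace_fin]

end EuclideanSpace

theorem setIntegral_eq_toReal_setLIntegral {X : Type*} [MeasurableSpace X] {μ : Measure X}
    {s : Set X} (hs : MeasurableSet s) {f : X → ℝ} (hf : Measurable f) (h0 : ∀ x ∈ s, 0 ≤ f x) :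
    ∫ x in s, f x ∂μ = (∫⁻ x in s, ENNReal.ofReal (f x) ∂μ).toReal :=
  integral_eq_lintegral_of_nonneg_ae (ae_restrict_of_forall_mem hs h0) hf.aestronglyMeasurable

/-- Half-space integral formula: for `n + α < 2m`,
`∫_{ℝⁿ₊} |x̃|^α/(|x̃|²+(x_n+D)²-1)^m dx = ω_{n-1} I_m^{n-2+α} φ_{(2m-n-α+1)/2}`,
where `ω_{n-1} = 2π^{(n-1)/2}/Γ((n-1)/2)` is the surface measure of the unit sphere in
`ℝ^{n-1}`, `I_m^β = ∫₀^∞ r^β/(1+r²)^m dr` and `φ_s = ∫_D^∞ (t²-1)^{-s} dt`.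
(Here `|x̃|² = ‖x‖² - x_n²` and `|x̃|²+(x_n+D)²-1 = ‖x‖²+2Dx_n+D²-1`.) -/
theorem halfspace_integral_formula (n : ℕ) (hn : 2 ≤ n) (D α m : ℝ)
    (hD : 1 < D) :
    (∫ x in {x : EuclideanSpace ℝ (Fin n) | 0 < x ⟨n - 1, by omega⟩},
        (‖x‖ ^ 2 - (x ⟨n - 1, by omega⟩) ^ 2) ^ (α / 2) /
          (‖x‖ ^ 2 + 2 * D * x ⟨n - 1, by omega⟩ + D ^ 2 - 1) ^ m) =
      (2 * Real.pi ^ (((n : ℝ) - 1) / 2) / Real.Gamma (((n : ℝ) - 1) / 2)) *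
        (∫ r in Set.Ioi (0 : ℝ), r ^ ((n : ℝ) - 2 + α) / (1 + r ^ 2) ^ m) *
        (∫ t in Set.Ioi D, (t ^ 2 - 1) ^ (-((2 * m - (n : ℝ) - α + 1) / 2))) := by
  obtain ⟨k, rfl⟩ : ∃ k, n = k + 1 := ⟨n - 1, by omega⟩
  have : NeZero k := ⟨by omega⟩
  have hexp₁ : ((k + 1 : ℕ) : ℝ) - 1 = k := by push_cast; ring
  have hexp₂ : ((k + 1 : ℕ) : ℝ) - 2 + α = k - 1 + α := by push_cast; ring
  have hexp₃ : -((2 * m - ((k + 1 : ℕ) : ℝ) - α + 1) / 2) = ((k : ℝ) + α - 2 * m) / 2 := by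
    push_cast; ring
  rw [hexp₁, hexp₂, hexp₃]
  simp only [Nat.add_sub_cancel, show (⟨k, k.lt_succ_self⟩ : Fin (k + 1)) = Fin.last k from rfl]
  rw [setIntegral_eq_toReal_setLIntegral (measurableSet_lt measurable_const (by fun_prop))
      (by fun_prop) ?base, EuclideanSpace.lintegral_halfspace hD.le, toReal_mul, toReal_mul,
    toReal_ofReal (by positivity),
    ← setIntegral_eq_toReal_setLIntegral measurableSet_Ioi (by fun_prop) ?radial,
    ← setIntegral_eq_toReal_setLIntegral measurableSet_Ioi (by fun_prop) ?axial]
  case base =>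
    intro x (hx : 0 < x (Fin.last k))
    have hden : 0 ≤ ‖x‖ ^ 2 + 2 * D * x (Fin.last k) + D ^ 2 - 1 := by nlinarith [sq_nonneg ‖x‖]
    rw [← EuclideanSpace.norm_measurableEquivLastProd_snd_sq]
    exact div_nonneg (by positivity) (rpow_nonneg hden _)
  case radial =>
    intro r (hr : 0 < r)
    positivity
  case axial =>
    intro t (ht : D < t)
    have : 0 ≤ t ^ 2 - 1 := by nlinarith
    positivity
end
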